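/- For every z ∈ ℝ^S, A ∈ ℝ^{S×m} and X ∈ ℝ^{n×m}, the spectral norm satisfies ‖(diag(z)A)∗X‖ ≤ ‖z‖ · max_{ν∈[S]} ‖X·diag(A_ν)‖ ≤ ‖z‖ · ‖A‖_∞ · ‖X‖, where ‖z‖ is the Euclidean norm of z, A_ν denotes the ν-th row of A, and ‖A‖_∞ is the maximum absolute value of an entry of A. -/

import Mathlib

open scoped BigOperators

/-- The Euclidean norm of a finitely supported real vector. -/
noncomputable def eNorm {β : Type*} [Fintype β] (v : β → ℝ) : ℝ :=
  Real.sqrt (∑ i, v i ^ 2)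

/-- The spectral norm of a real matrix: `‖M‖ = max_{ξ ∈ S^{m-1}} ‖Mξ‖`. -/
noncomputable def specNorm {α β : Type*} [Fintype α] [Fintype β]
    (M : Matrix α β ℝ) : ℝ :=
  ⨆ ξ : {v : β → ℝ // eNorm v = 1}, eNorm (M.mulVec ξ.1)

/-- The column-wise Khatri–Rao product: `(A ∗ X)_{(ν,i),j} = A_{νj} ⬝ X_{ij}`. -/
def khatriRao {S n m : ℕ} (A : Matrix (Fin S) (Fin m) ℝ) (X : Matrix (Fin n) (Fin m) ℝ) :
    Matrix (Fin S × Fin n) (Fin m) ℝ :=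
  Matrix.of fun p j => A p.1 j * X p.2 j

/-!
Row `(ν, i)` of `(diag(z) A) ∗ X` applied to `ξ` is `z ν * (X diag(A_ν) ξ) i`, so
`‖((diag(z) A) ∗ X) ξ‖² = ∑_ν z_ν² ‖X diag(A_ν) ξ‖²`. The second inequality is
submultiplicativity of the operator norm together with `‖diag(A_ν)‖ = max_j |A ν j|`.
Both are argued for Mathlib's L2 operator norm on matrices, which agrees with `specNorm`.
-/

open Matrix WithLp
open scoped Matrix.Norms.L2Operator

lemma eNorm_eq_norm_toLp {β : Type*} [Fintype β] (v : β → ℝ) :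
    eNorm v = ‖toLp 2 v‖ := by
  simp [eNorm, EuclideanSpace.norm_eq]

lemma specNorm_eq_l2_opNorm {α β : Type*} [Fintype α] [Fintype β] [DecidableEq β]
    (M : Matrix α β ℝ) : specNorm M = ‖M‖ := by
  rw [l2_opNorm_def, ← ContinuousLinearMap.sSup_sphere_eq_norm, specNorm, iSup, Set.image]
  congr 1
  ext r
  simp only [Set.mem_range, Subtype.exists, mem_sphere_zero_iff_norm, Set.mem_ofPred_eq]
  constructor
  · rintro ⟨v, hv, rfl⟩
    exact ⟨toLp 2 v, by rwa [← eNorm_eq_norm_toLp], by simp [eNorm_eq_norm_toLp]⟩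
  · rintro ⟨x, hx, rfl⟩
    exact ⟨ofLp x, by rwa [eNorm_eq_norm_toLp], by rw [eNorm_eq_norm_toLp]; rfl⟩

lemma norm_toLp_prod_mul_le {α β : Type*} [Fintype α] [Fintype β] (z : α → ℝ) (u : α → β → ℝ)
    {s : ℝ} (hs : 0 ≤ s) (hu : ∀ a, ‖toLp 2 (u a)‖ ≤ s) :
    ‖toLp 2 (fun p : α × β => z p.1 * u p.1 p.2)‖ ≤ ‖toLp 2 z‖ * s := by
  refine (sq_le_sq₀ (norm_nonneg _) (by positivity)).mp ?_
  calc ‖toLp 2 (fun p : α × β => z p.1 * u p.1 p.2)‖ ^ 2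
      = ∑ a, z a ^ 2 * ‖toLp 2 (u a)‖ ^ 2 := by
        simp only [EuclideanSpace.real_norm_sq_eq, Fintype.sum_prod_type,
          mul_pow, Finset.mul_sum]
    _ ≤ ∑ a, z a ^ 2 * s ^ 2 := by gcongr with a; exact hu a
    _ = (‖toLp 2 z‖ * s) ^ 2 := by
        simp only [mul_pow, EuclideanSpace.real_norm_sq_eq, Finset.sum_mul]

lemma khatriRao_diagonal_mul_mulVec {S n m : ℕ} (z : Fin S → ℝ) (A : Matrix (Fin S) (Fin m) ℝ)
    (X : Matrix (Fin n) (Fin m) ℝ) (v : Fin m → ℝ) :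
    khatriRao (diagonal z * A) X *ᵥ v = fun p => z p.1 * ((X * diagonal (A p.1)) *ᵥ v) p.2 := by
  ext p
  simp only [mulVec, dotProduct, khatriRao, of_apply, diagonal_mul, mul_diagonal, Finset.mul_sum]
  exact Finset.sum_congr rfl fun j _ => by ring

lemma l2_opNorm_khatriRao_diagonal_mul_le {S n m : ℕ} (z : Fin S → ℝ)
    (A : Matrix (Fin S) (Fin m) ℝ) (X : Matrix (Fin n) (Fin m) ℝ) {s : ℝ} (hs : 0 ≤ s)
    (hA : ∀ ν, ‖X * diagonal (A ν)‖ ≤ s) :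
    ‖khatriRao (diagonal z * A) X‖ ≤ ‖toLp 2 z‖ * s := by
  rw [l2_opNorm_def]
  refine ContinuousLinearMap.opNorm_le_bound _ (by positivity) fun x => ?_
  have hx : ∀ ν, ‖toLp 2 ((X * diagonal (A ν)) *ᵥ ofLp x)‖ ≤ s * ‖x‖ := fun ν =>
    (l2_opNorm_mulVec _ x).trans (by gcongr; exact hA ν)
  have hK := norm_toLp_prod_mul_le z _ (by positivity) hx
  rw [← khatriRao_diagonal_mul_mulVec, ← mul_assoc] at hK
  exact hK

/-- `‖(diag(z)A) ∗ X‖ ≤ ‖z‖ ⬝ max_ν ‖X ⬝ diag(A_ν)‖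
  ≤ ‖z‖ ⬝ ‖A‖_∞ ⬝ ‖X‖`, where `‖z‖` is the Euclidean norm of `z`, `A_ν` is the
`ν`-th row of `A` and `‖A‖_∞` is the maximum absolute value of an entry of `A`. -/
theorem specNorm_diag_khatriRao_le_l2 {S n m : ℕ} (z : Fin S → ℝ)
    (A : Matrix (Fin S) (Fin m) ℝ) (X : Matrix (Fin n) (Fin m) ℝ) :
    specNorm (khatriRao (Matrix.diagonal z * A) X) ≤
        eNorm z * ⨆ ν : Fin S, specNorm (X * Matrix.diagonal fun j => A ν j) ∧
      eNorm z * (⨆ ν : Fin S, specNorm (X * Matrix.diagonal fun j => A ν j)) ≤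
        eNorm z * (⨆ p : Fin S × Fin m, |A p.1 p.2|) * specNorm X := by
  simp only [specNorm_eq_l2_opNorm, eNorm_eq_norm_toLp]
  set a := ⨆ p : Fin S × Fin m, |A p.1 p.2|
  have ha : 0 ≤ a := Real.iSup_nonneg fun _ => abs_nonneg _
  have hrow : ∀ ν, ‖A ν‖ ≤ a := fun ν => (pi_norm_le_iff_of_nonneg ha).mpr fun j =>
    le_ciSup (f := fun p : Fin S × Fin m => |A p.1 p.2|) (Set.finite_range _).bddAbove (ν, j)
  refine ⟨l2_opNorm_khatriRao_diagonal_mul_le z A X (Real.iSup_nonneg fun _ => norm_nonneg _)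
    fun ν => le_ciSup (f := fun ν => ‖X * diagonal (A ν)‖) (Set.finite_range _).bddAbove ν, ?_⟩
  rw [mul_assoc]
  gcongr
  refine Real.iSup_le (fun ν => ?_) (by positivity)
  calc ‖X * diagonal (A ν)‖ ≤ ‖X‖ * ‖A ν‖ := by simpa using l2_opNorm_mul X (diagonal (A ν))
    _ ≤ a * ‖X‖ := by rw [mul_comm]; gcongr; exact hrow ν
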